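/- Limit of the generalized Rényi divergence as α → 0 (Theil index form): the limit as α tends to 0 (with α ≠ 0, 1) of R_α(p ‖ q) equals Σ_j p̄_j · r̄_j · ln r̄_j, where p̄_j = p_j/Σ_k p_k, q̄_j = q_j/Σ_k q_k, and r̄_j = q̄_j/p̄_j. -/

import Mathlib

/-!
Write `P = Σ p`, `Q = Σ q` and `S(α) = Σ_j p_j r_j^{1-α}`, so that `R_α = f(α) / (α(1-α))` with
`f(α) = α log P + (1-α) log Q - log S(α)`. Since `S(0) = Q`, `f(0) = 0`, hence `R_α → f'(0)` as
`α → 0`, and `f'(0) = log P - log Q + (Σ_j q_j log r_j) / Q`, which is the Theil sum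
`Σ_j q̄_j log r̄_j` once `r̄_j = r_j P / Q` is expanded.
-/

/-- Generalized Rényi (alpha-gamma) divergence of order `α` between two
positive mass functions `p q : Fin m → ℝ`, with `r j = q j / p j`. -/
noncomputable def renyiDiv (m : ℕ) (α : ℝ) (p q : Fin m → ℝ) : ℝ :=
  (1 / (α * (1 - α))) *
    Real.log (((∑ j, p j) ^ α * (∑ j, p j * (q j / p j)) ^ (1 - α)) /
      ∑ j, p j * (q j / p j) ^ (1 - α))

open Filter Topology Real Finset

theorem tendsto_one_div_mul_one_sub_mul_of_hasDerivAt {f : ℝ → ℝ} {L : ℝ}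
    (hf : HasDerivAt f L 0) (hf0 : f 0 = 0) :
    Tendsto (fun α => 1 / (α * (1 - α)) * f α) (𝓝[≠] 0) (𝓝 L) := by
  have hslope : Tendsto (fun α => f α / α) (𝓝[≠] 0) (𝓝 L) := by
    refine (hasDerivAt_iff_tendsto_slope.mp hf).congr fun α => ?_
    simp [slope_def_field, hf0]
  have hinv : Tendsto (fun α : ℝ => (1 - α)⁻¹) (𝓝[≠] 0) (𝓝 1) := by
    have : Tendsto (fun α : ℝ => (1 - α)⁻¹) (𝓝 0) (𝓝 (1 - 0)⁻¹) :=
      ((continuous_const.sub continuous_id).tendsto 0).inv₀ (by norm_num)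
    simpa using this.mono_left nhdsWithin_le_nhds
  have h := hslope.mul hinv
  rw [mul_one] at h
  exact h.congr fun α => by rw [one_div, mul_inv]; ring

section
variable {ι : Type*} [Fintype ι]

theorem sum_mul_div_cancel₀ {p q : ι → ℝ} (hp : ∀ j, p j ≠ 0) :
    ∑ j, p j * (q j / p j) = ∑ j, q j :=
  sum_congr rfl fun j _ => mul_div_cancel₀ _ (hp j)

theorem hasDerivAt_sum_mul_rpow_one_sub {p r : ι → ℝ} (hr : ∀ j, 0 < r j) (α : ℝ) :
    HasDerivAt (fun α => ∑ j, p j * r j ^ (1 - α))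
      (-∑ j, p j * r j ^ (1 - α) * log (r j)) α := by
  rw [← sum_neg_distrib]
  refine HasDerivAt.fun_sum fun j _ => ?_
  have h := ((Real.hasStrictDerivAt_const_rpow (hr j) (1 - α)).hasDerivAt.comp α
    ((hasDerivAt_id α).const_sub 1)).const_mul (p j)
  exact h.congr_deriv (by ring)

variable [Nonempty ι] {p q : ι → ℝ} (hp : ∀ j, 0 < p j) (hq : ∀ j, 0 < q j)
include hp hq

theorem hasDerivAt_renyi_log_ratio :
    HasDerivAt
      (fun α : ℝ => α * log (∑ k, p k) + (1 - α) * log (∑ k, q k) -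
        log (∑ j, p j * (q j / p j) ^ (1 - α)))
      (log (∑ k, p k) - log (∑ k, q k) + (∑ j, q j * log (q j / p j)) / ∑ k, q k) 0 := by
  have hpq : ∀ j, p j * (q j / p j) = q j := fun j => mul_div_cancel₀ _ (hp j).ne'
  have hS : HasDerivAt (fun α : ℝ => log (∑ j, p j * (q j / p j) ^ (1 - α)))
      (-(∑ j, q j * log (q j / p j)) / ∑ k, q k) 0 := by
    have h := (hasDerivAt_sum_mul_rpow_one_sub (p := p) (fun j => div_pos (hq j) (hp j)) 0).log
      (by simpa [hpq] using (sum_pos (fun j _ => hq j) univ_nonempty).ne')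
    simpa [hpq] using h
  have hlin : HasDerivAt (fun α : ℝ => α * log (∑ k, p k) + (1 - α) * log (∑ k, q k))
      (log (∑ k, p k) - log (∑ k, q k)) 0 := by
    have h := ((hasDerivAt_id (0 : ℝ)).mul_const (log (∑ k, p k))).add
      (((hasDerivAt_id (0 : ℝ)).const_sub 1).mul_const (log (∑ k, q k)))
    exact h.congr_deriv (by ring)
  exact (hlin.sub hS).congr_deriv (by ring)

theorem sum_theil_eq :
    ∑ j, (p j / ∑ k, p k) * ((q j / ∑ k, q k) / (p j / ∑ k, p k)) *
        log ((q j / ∑ k, q k) / (p j / ∑ k, p k)) =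
      log (∑ k, p k) - log (∑ k, q k) + (∑ j, q j * log (q j / p j)) / ∑ k, q k := by
  have hP : 0 < ∑ k, p k := sum_pos (fun j _ => hp j) univ_nonempty
  have hQ : 0 < ∑ k, q k := sum_pos (fun j _ => hq j) univ_nonempty
  have hterm : ∀ j, (p j / ∑ k, p k) * ((q j / ∑ k, q k) / (p j / ∑ k, p k)) *
      log ((q j / ∑ k, q k) / (p j / ∑ k, p k)) =
        q j * log (q j / p j) / ∑ k, q k +
          (q j / ∑ k, q k) * (log (∑ k, p k) - log (∑ k, q k)) := by
    intro j
    have hr : (q j / ∑ k, q k) / (p j / ∑ k, p k) = q j / p j * ((∑ k, p k) / ∑ k, q k) := by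
      field_simp
    rw [mul_div_cancel₀ _ (div_pos (hp j) hP).ne', hr,
      log_mul (div_pos (hq j) (hp j)).ne' (div_pos hP hQ).ne', log_div hP.ne' hQ.ne']
    ring
  rw [sum_congr rfl fun j _ => hterm j, sum_add_distrib, ← sum_div, ← sum_mul, ← sum_div,
    div_self hQ.ne']
  ring

end

theorem renyiDiv_eq {m : ℕ} [NeZero m] {p q : Fin m → ℝ} (hp : ∀ j, 0 < p j)
    (hq : ∀ j, 0 < q j) (α : ℝ) :
    renyiDiv m α p q = 1 / (α * (1 - α)) *
      (α * log (∑ k, p k) + (1 - α) * log (∑ k, q k) -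
        log (∑ j, p j * (q j / p j) ^ (1 - α))) := by
  have hS : 0 < ∑ j, p j * (q j / p j) ^ (1 - α) :=
    sum_pos (fun j _ => mul_pos (hp j) (rpow_pos_of_pos (div_pos (hq j) (hp j)) _))
      univ_nonempty
  have hP : 0 < ∑ k, p k := sum_pos (fun j _ => hp j) univ_nonempty
  have hQ : 0 < ∑ k, q k := sum_pos (fun j _ => hq j) univ_nonempty
  rw [renyiDiv, sum_mul_div_cancel₀ fun j => (hp j).ne', log_div (by positivity) hS.ne', log_mul (by positivity) (by positivity),
    log_rpow hP, log_rpow hQ]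

/-- Limit of the generalized Rényi divergence as `α → 0` (Theil index form):
as `α` tends to `0` with `α ≠ 0, 1`, `R_α(p‖q)` tends to
`Σ_j p̄_j r̄_j ln r̄_j`, where `p̄_j = p_j/Σ p`, `q̄_j = q_j/Σ q`, `r̄_j = q̄_j/p̄_j`. -/
theorem renyiDiv_tendsto_zero (m : ℕ) (hm : 1 ≤ m) (p q : Fin m → ℝ)
    (hp : ∀ j, 0 < p j) (hq : ∀ j, 0 < q j) :
    Filter.Tendsto (fun α : ℝ => renyiDiv m α p q)
      (nhdsWithin 0 {α : ℝ | α ≠ 0 ∧ α ≠ 1})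
      (nhds (∑ j, (p j / ∑ k, p k) * ((q j / ∑ k, q k) / (p j / ∑ k, p k)) *
        Real.log ((q j / ∑ k, q k) / (p j / ∑ k, p k)))) := by
  have : NeZero m := ⟨by omega⟩
  have hlim := tendsto_one_div_mul_one_sub_mul_of_hasDerivAt (hasDerivAt_renyi_log_ratio hp hq)
    (by simp [sum_mul_div_cancel₀ fun j => (hp j).ne'])
  rw [sum_theil_eq hp hq]
  exact (hlim.mono_left (nhdsWithin_mono 0 fun α hα => hα.1)).congr
    fun α => (renyiDiv_eq hp hq α).symm
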